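/- Let G be a connected graph with n vertices. Then G is 1-metamour-regular if and only if n ≥ 4 is even and either G = P4, or G = K_n − μ for some perfect matching μ of K_n. -/

import Mathlib

namespace SimpleGraph

variable {V : Type*}

/-- The metamour graph of `G`: same vertices, adjacency = distance exactly 2 in `G`. -/
def metamour (G : SimpleGraph V) : SimpleGraph V where
  Adj u v := G.dist u v = 2
  symm := by
    constructor
    intro u v h
    rwa [dist_comm]
  loopless := by
    constructor
    intro v h
    simp [dist_self] at h

/-- The metamour-degree of a vertex: the number of its metamours. -/
noncomputable def metamourDegree (G : SimpleGraph V) (v : V) : ℕ :=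
  {u | G.metamour.Adj v u}.ncard

end SimpleGraph

/-!
If every vertex has exactly one metamour, the metamour relation is a perfect matching, so `n` is
even; a vertex, its metamour and a common neighbour give `n ≥ 3`, hence `n ≥ 4`. If `G` has
diameter at most 2, its non-edges are exactly the metamour pairs, so `G = K_n − μ` with `μ` the
metamour matching. Otherwise a shortest path `v₀ v₁ v₂ v₃` has metamour pairs `v₀ v₂` and `v₁ v₃`,
and uniqueness of metamours leaves no room for a further neighbour of any `vᵢ`, so by connectedness
`G = P₄`. Conversely, in `K_n − μ` with `n ≥ 3` any two vertices have a common neighbour, so the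
metamours are exactly the `μ`-partners.
-/

namespace SimpleGraph

variable {V W : Type*} {G : SimpleGraph V} {H : SimpleGraph W} {u v : V}

theorem dist_eq_two_iff :
    G.dist u v = 2 ↔ u ≠ v ∧ ¬G.Adj u v ∧ ∃ w, G.Adj u w ∧ G.Adj w v := by
  have hedist : G.dist u v = 2 ↔ G.edist u v = 2 := by
    refine ⟨fun h => ?_, fun h => by simp [dist, h]⟩
    rw [← (Reachable.of_dist_ne_zero (by omega)).coe_dist_eq_edist, h]
    rfl
  simp [hedist, edist_eq_two_iff, Set.Nonempty, mem_commonNeighbors, adj_comm _ v]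

theorem dist_le_two_of_adj_of_adj {w : V} (h₁ : G.Adj u w) (h₂ : G.Adj w v) : G.dist u v ≤ 2 :=
  G.dist_le (.cons h₁ (.cons h₂ .nil))

theorem exists_adj_adj_adj_dist_eq_three (h : 2 < G.dist u v) :
    ∃ v₁ v₂ v₃, G.Adj u v₁ ∧ G.Adj v₁ v₂ ∧ G.Adj v₂ v₃ ∧ G.dist u v₃ = 3 := by
  obtain ⟨p, hp⟩ := exists_walk_of_dist_ne_zero (G := G) (by omega : G.dist u v ≠ 0)
  obtain ⟨x, q, hq, hdist⟩ : ∃ x, ∃ q : G.Walk u x, q.length = 3 ∧ q.length = G.dist u x :=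
    ⟨_, p.take 3, by rw [Walk.take_length]; omega, length_eq_dist_of_subwalk hp (p.isSubwalk_take 3)⟩
  match q, hq with
  | .cons h₁ (.cons h₂ (.cons h₃ .nil)), _ => exact ⟨_, _, _, h₁, h₂, h₃, hdist.symm⟩

theorem Reachable.mem_of_forall_adj_mem {s : Set V} (hs : ∀ x y, G.Adj x y → x ∈ s → y ∈ s)
    (huv : G.Reachable u v) (hu : u ∈ s) : v ∈ s := by
  obtain ⟨p⟩ := huv
  induction p with
  | nil => exact hu
  | cons h _ ih => exact ih (hs _ _ h hu)

theorem even_card_of_existsUnique_adj [Fintype V] {M : SimpleGraph V}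
    (hM : ∀ v, ∃! u, M.Adj v u) : Even (Fintype.card V) :=
  Subgraph.IsPerfectMatching.even_card (M := (⊤ : M.Subgraph))
    (Subgraph.isPerfectMatching_iff.mpr (by simpa using hM))

theorem metamour_adj_iff :
    G.metamour.Adj u v ↔ u ≠ v ∧ ¬G.Adj u v ∧ ∃ w, G.Adj u w ∧ G.Adj w v :=
  dist_eq_two_iff

theorem metamourDegree_eq_one_iff : G.metamourDegree v = 1 ↔ ∃! u, G.metamour.Adj v u := by
  simp only [metamourDegree, Set.ncard_eq_one, Set.eq_singleton_iff_unique_mem, ExistsUnique,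
    Set.mem_ofPred_eq]

theorem Iso.metamour_adj_iff (e : G ≃g H) :
    H.metamour.Adj (e u) (e v) ↔ G.metamour.Adj u v := by
  simp only [SimpleGraph.metamour_adj_iff, e.map_adj_iff, e.injective.ne_iff, e.surjective.exists]

theorem Iso.existsUnique_metamour_adj_iff (e : G ≃g H) :
    (∃! u, H.metamour.Adj (e v) u) ↔ ∃! u, G.metamour.Adj v u :=
  (e.toEquiv.existsUnique_congr fun _ => e.metamour_adj_iff.symm).symm

theorem existsUnique_metamour_adj_pathGraph_four (v : Fin 4) :
    ∃! u, (pathGraph 4).metamour.Adj v u := by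
  simp only [metamour_adj_iff, pathGraph_adj, ExistsUnique]
  revert v
  decide

theorem three_le_card_of_metamour_adj [Fintype V] (h : G.metamour.Adj u v) :
    3 ≤ Fintype.card V := by
  classical
  obtain ⟨huv, -, w, huw, hwv⟩ := metamour_adj_iff.mp h
  simpa [Finset.card_eq_three.mpr ⟨u, w, v, G.ne_of_adj huw, huv, G.ne_of_adj hwv, rfl⟩] using
    Finset.card_le_univ {u, w, v}

theorem metamour_top_sdiff {M : SimpleGraph V} (hM : ∀ v, ∃! u, M.Adj v u)
    (hV : 3 ≤ ENat.card V) : ((⊤ : SimpleGraph V) \ M).metamour = M := by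
  ext v u
  rw [metamour_adj_iff]
  simp only [sdiff_adj, top_adj, not_and, not_not]
  constructor
  · rintro ⟨hvu, hM', -⟩
    exact hM' hvu
  · intro hvu
    obtain ⟨w, hwv, hwu⟩ := ENat.exists_ne_ne_of_three_le hV v u
    exact ⟨M.ne_of_adj hvu, fun _ => hvu, w, ⟨Ne.symm hwv, fun h => hwu ((hM v).unique h hvu)⟩,
      hwu, fun h => hwv ((hM u).unique h.symm hvu.symm)⟩

theorem eq_top_sdiff_metamour (hG : G.Connected) (h : ∀ u v, G.dist u v ≤ 2) :
    G = ⊤ \ G.metamour := by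
  ext u v
  simp only [sdiff_adj, top_adj, metamour]
  constructor
  · intro huv
    simp [G.ne_of_adj huv, dist_eq_one_iff_adj.mpr huv]
  · rintro ⟨huv, hd⟩
    have hpos := hG.pos_dist_of_ne huv
    have hle := h u v
    exact dist_eq_one_iff_adj.mp (by omega)

section PathOfLengthThree

variable {v₀ v₁ v₂ v₃ : V}

theorem metamour_adj_of_dist_eq_three (h₀₁ : G.Adj v₀ v₁) (h₁₂ : G.Adj v₁ v₂)
    (h₂₃ : G.Adj v₂ v₃) (h₀₃ : G.dist v₀ v₃ = 3) : G.metamour.Adj v₀ v₂ := by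
  refine metamour_adj_iff.mpr ⟨?_, fun h₀₂ => ?_, v₁, h₀₁, h₁₂⟩
  · rintro rfl
    simp [dist_eq_one_iff_adj.mpr h₂₃] at h₀₃
  · have := dist_le_two_of_adj_of_adj h₀₂ h₂₃
    omega

theorem eq_or_eq_of_adj_of_dist_eq_three (hM : ∀ v, ∃! u, G.metamour.Adj v u)
    (h₀₁ : G.Adj v₀ v₁) (h₁₂ : G.Adj v₁ v₂) (h₂₃ : G.Adj v₂ v₃) (h₀₃ : G.dist v₀ v₃ = 3)
    (hu : G.Adj v₁ u) : u = v₀ ∨ u = v₂ := by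
  by_contra! ⟨hu₀, hu₂⟩
  have m₀₂ := metamour_adj_of_dist_eq_three h₀₁ h₁₂ h₂₃ h₀₃
  have m₃₁ := metamour_adj_of_dist_eq_three h₂₃.symm h₁₂.symm h₀₁.symm (by rwa [dist_comm])
  -- `u` cannot be a metamour of `v₀` or of `v₂`, so it is adjacent to both
  have h₀u : G.Adj v₀ u := by
    by_contra h
    exact hu₂ ((hM v₀).unique (metamour_adj_iff.mpr ⟨hu₀.symm, h, v₁, h₀₁, hu⟩) m₀₂)
  have h₂u : G.Adj v₂ u := by
    by_contra h
    exact hu₀ ((hM v₂).unique (metamour_adj_iff.mpr ⟨hu₂.symm, h, v₁, h₁₂.symm, hu⟩) m₀₂.symm)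
  have m₃u : G.metamour.Adj v₃ u := by
    refine metamour_adj_iff.mpr ⟨?_, fun h => ?_, v₂, h₂₃.symm, h₂u⟩
    · rintro rfl
      simp [dist_eq_one_iff_adj.mpr h₀u] at h₀₃
    · have := dist_le_two_of_adj_of_adj h₀u h.symm
      omega
  obtain rfl := (hM v₃).unique m₃u m₃₁
  exact G.irrefl hu

theorem eq_of_adj_of_dist_eq_three (hM : ∀ v, ∃! u, G.metamour.Adj v u)
    (h₀₁ : G.Adj v₀ v₁) (h₁₂ : G.Adj v₁ v₂) (h₂₃ : G.Adj v₂ v₃) (h₀₃ : G.dist v₀ v₃ = 3)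
    (hu : G.Adj v₀ u) : u = v₁ := by
  by_contra hu₁
  have m₀₂ := metamour_adj_of_dist_eq_three h₀₁ h₁₂ h₂₃ h₀₃
  have m₁₃ := (metamour_adj_of_dist_eq_three h₂₃.symm h₁₂.symm h₀₁.symm (by rwa [dist_comm])).symm
  have h₁u : ¬G.Adj v₁ u := by
    intro h
    rcases eq_or_eq_of_adj_of_dist_eq_three hM h₀₁ h₁₂ h₂₃ h₀₃ h with rfl | rfl
    · exact G.irrefl hu
    · exact (metamour_adj_iff.mp m₀₂).2.1 hu
  obtain rfl := (hM v₁).unique (metamour_adj_iff.mpr ⟨Ne.symm hu₁, h₁u, v₀, h₀₁.symm, hu⟩) m₁₃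
  simp [dist_eq_one_iff_adj.mpr hu] at h₀₃

theorem mem_of_dist_eq_three (hG : G.Connected) (hM : ∀ v, ∃! u, G.metamour.Adj v u)
    (h₀₁ : G.Adj v₀ v₁) (h₁₂ : G.Adj v₁ v₂) (h₂₃ : G.Adj v₂ v₃) (h₀₃ : G.dist v₀ v₃ = 3)
    (u : V) : u ∈ ({v₀, v₁, v₂, v₃} : Set V) := by
  have h₃₀ : G.dist v₃ v₀ = 3 := by rwa [dist_comm]
  refine (hG.preconnected v₀ u).mem_of_forall_adj_mem ?_ (by simp)
  rintro x y hxy (rfl | rfl | rfl | rfl)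
  · simp [eq_of_adj_of_dist_eq_three hM h₀₁ h₁₂ h₂₃ h₀₃ hxy]
  · rcases eq_or_eq_of_adj_of_dist_eq_three hM h₀₁ h₁₂ h₂₃ h₀₃ hxy with rfl | rfl <;> simp
  · rcases eq_or_eq_of_adj_of_dist_eq_three hM h₂₃.symm h₁₂.symm h₀₁.symm h₃₀ hxy with rfl | rfl <;>
      simp
  · simp [eq_of_adj_of_dist_eq_three hM h₂₃.symm h₁₂.symm h₀₁.symm h₃₀ hxy]

theorem nonempty_iso_pathGraph_four (hG : G.Connected) (hM : ∀ v, ∃! u, G.metamour.Adj v u)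
    (h₀₁ : G.Adj v₀ v₁) (h₁₂ : G.Adj v₁ v₂) (h₂₃ : G.Adj v₂ v₃) (h₀₃ : G.dist v₀ v₃ = 3) :
    Nonempty (G ≃g pathGraph 4) := by
  have h₃₀ : G.dist v₃ v₀ = 3 := by rwa [dist_comm]
  have m₀₂ := metamour_adj_of_dist_eq_three h₀₁ h₁₂ h₂₃ h₀₃
  have m₃₁ := metamour_adj_of_dist_eq_three h₂₃.symm h₁₂.symm h₀₁.symm h₃₀
  let g : Fin 4 → V := ![v₀, v₁, v₂, v₃]
  have hdist (i : Fin 4) : G.dist v₀ (g i) = i := by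
    fin_cases i
    exacts [dist_self, dist_eq_one_iff_adj.mpr h₀₁, m₀₂, h₀₃]
  have hinj : g.Injective := fun i j h => Fin.ext (by rw [← hdist i, ← hdist j, h])
  have hsurj : g.Surjective := fun u => by
    rcases mem_of_dist_eq_three hG hM h₀₁ h₁₂ h₂₃ h₀₃ u with rfl | rfl | rfl | rfl
    exacts [⟨0, rfl⟩, ⟨1, rfl⟩, ⟨2, rfl⟩, ⟨3, rfl⟩]
  have n₀₂ := (metamour_adj_iff.mp m₀₂).2.1
  have n₃₁ := (metamour_adj_iff.mp m₃₁).2.1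
  have n₀₃ : ¬G.Adj v₀ v₃ := fun h => by simp [dist_eq_one_iff_adj.mpr h] at h₀₃
  have hadj (i j : Fin 4) : G.Adj (g i) (g j) ↔ (pathGraph 4).Adj i j := by
    fin_cases i <;> fin_cases j <;>
      simp [g, pathGraph_adj, h₀₁, h₁₂, h₂₃, h₀₁.symm, h₁₂.symm, h₂₃.symm, n₀₂, n₃₁, n₀₃,
        mt Adj.symm n₀₂, mt Adj.symm n₃₁, mt Adj.symm n₀₃]
  exact ⟨(⟨Equiv.ofBijective g ⟨hinj, hsurj⟩, hadj _ _⟩ : pathGraph 4 ≃g G).symm⟩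

end PathOfLengthThree

end SimpleGraph

open SimpleGraph

/-- A connected graph G on n vertices is 1-metamour-regular iff n ≥ 4
is even and G is the path P4 or G = K_n − μ for a perfect matching μ of K_n. -/
theorem one_metamour_regular_iff {V : Type*} [Fintype V] (G : SimpleGraph V)
    (hG : G.Connected) :
    (∀ v : V, G.metamourDegree v = 1) ↔
      (4 ≤ Fintype.card V ∧ Even (Fintype.card V) ∧
        (Nonempty (G ≃g SimpleGraph.pathGraph 4) ∨
          ∃ M : SimpleGraph V, (∀ v : V, ∃! u : V, M.Adj v u) ∧
            G = (⊤ : SimpleGraph V) \ M)) := by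
  simp only [metamourDegree_eq_one_iff]
  constructor
  · intro hM
    have heven := even_card_of_existsUnique_adj hM
    obtain ⟨v⟩ := hG.nonempty
    obtain ⟨u, hvu, -⟩ := hM v
    have h3 := three_le_card_of_metamour_adj hvu
    refine ⟨by obtain ⟨k, hk⟩ := heven; omega, heven, ?_⟩
    by_cases hdiam : ∀ a b, G.dist a b ≤ 2
    · exact .inr ⟨G.metamour, hM, eq_top_sdiff_metamour hG hdiam⟩
    · push Not at hdiam
      obtain ⟨v₀, w, hfar⟩ := hdiam
      obtain ⟨v₁, v₂, v₃, h₀₁, h₁₂, h₂₃, h₀₃⟩ := exists_adj_adj_adj_dist_eq_three hfar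
      exact .inl (nonempty_iso_pathGraph_four hG hM h₀₁ h₁₂ h₂₃ h₀₃)
  · rintro ⟨h4, -, he | ⟨M, hM, rfl⟩⟩ v
    · obtain ⟨e⟩ := he
      exact e.existsUnique_metamour_adj_iff.mp (existsUnique_metamour_adj_pathGraph_four (e v))
    · rw [metamour_top_sdiff hM (by simp; omega)]
      exact hM v
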